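/- The product of flows is associative where defined: given flows f, g, h, the product (fg)h is defined iff f(gh) is defined, and when defined they are equal. -/

import Mathlib

/-- First-order terms over natural-number symbols: variables and applications. -/
inductive Tm : Type
  | var : ℕ → Tm
  | app : ℕ → List Tm → Tm

namespace Tm

/-- Apply a substitution (map from variables to terms) homomorphically. -/
def subst (σ : ℕ → Tm) : Tm → Tm
  | var x => σ x
  | app f ts => app f (ts.attach.map fun ⟨t, _⟩ => subst σ t)

/-- List of variables occurring in a term. -/
def varsL : Tm → List ℕ
  | var x => [x]
  | app _ ts => ts.attach.flatMap fun ⟨t, _⟩ => varsL t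

/-- Height of a term: maximal distance from the root to a subterm. -/
def height : Tm → ℕ
  | var _ => 0
  | app _ ts => (ts.attach.map fun ⟨t, _⟩ => height t + 1).foldr max 0

/-- Heights of the occurrences of the variable `x` in a term. -/
def occs (x : ℕ) : Tm → List ℕ
  | var y => if y = x then [0] else []
  | app _ ts => ts.attach.flatMap fun ⟨t, _⟩ => (occs x t).map (· + 1)

/-- Symbols occurring in a term, together with the arity they are used with. -/
def symar : Tm → List (ℕ × ℕ)
  | var _ => []
  | app f ts => (f, ts.length) :: ts.attach.flatMap fun ⟨t, _⟩ => symar t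

end Tm

open Tm

/-- Set of variables of a term. -/
def tvars (t : Tm) : Set ℕ := {x | x ∈ t.varsL}

/-- A term is closed when it has no variables. -/
def Closed (t : Tm) : Prop := t.varsL = []

/-- A substitution is finitary when it is the identity on all but finitely many variables. -/
def Finitary (σ : ℕ → Tm) : Prop := {x | σ x ≠ .var x}.Finite

/-- `σ` unifies `t` and `u`. -/
def Unifies (σ : ℕ → Tm) (t u : Tm) : Prop := subst σ t = subst σ u

/-- `θ` is a most general unifier of `t` and `u`: a (finitary) unifier such that
any other finitary unifier factors as an instance of it. -/
def IsMGU (θ : ℕ → Tm) (t u : Tm) : Prop :=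
  Finitary θ ∧ Unifies θ t u ∧
    ∀ σ, Finitary σ → Unifies σ t u → ∃ ρ, Finitary ρ ∧ ∀ x, σ x = subst ρ (θ x)

/-- Renaming of a term along a bijection of variables. -/
def rename (π : ℕ ≃ ℕ) (t : Tm) : Tm := subst (fun x => .var (π x)) t

/-- A flow is (the data of) a pair of terms `head ⊸ body`. -/
abbrev UFlow := Tm × Tm

/-- The flow condition: the variables of the head occur in the body. -/
def IsFlow (f : UFlow) : Prop := tvars f.1 ⊆ tvars f.2

/-- Equality of flows up to (simultaneous, bijective) renaming of variables. -/
def FlowEquiv (f g : UFlow) : Prop :=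
  ∃ π : ℕ ≃ ℕ, rename π f.1 = g.1 ∧ rename π f.2 = g.2

/-- Variables of a flow. -/
def flowVars (f : UFlow) : Set ℕ := tvars f.1 ∪ tvars f.2

/-- `h` is a product of the flows `f = u ⊸ v` and `g = t ⊸ w`: choosing representatives
with disjoint variables, `h = uθ ⊸ wθ` for `θ` a most general unifier of `v` and `t`. -/
def IsProd (f g h : UFlow) : Prop :=
  ∃ f' g' θ, FlowEquiv f f' ∧ FlowEquiv g g' ∧ flowVars f' ∩ flowVars g' = ∅ ∧
    IsMGU θ f'.2 g'.1 ∧ h = (subst θ f'.1, subst θ g'.2)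

/-- A wiring: a set of flows (finite sets of flows are considered up to renaming,
so we model them as sets of representatives). -/
abbrev Wiring := Set UFlow

/-- Product of wirings: pointwise product of flows, where defined. -/
def wmul (F G : Wiring) : Wiring := {h | ∃ f ∈ F, ∃ g ∈ G, IsProd f g h}

/-- The unit wiring `I = x ⊸ x`. -/
def wI : Wiring := {f | FlowEquiv (.var 0, .var 0) f}

/-- Powers of a wiring. -/
def wpow (F : Wiring) : ℕ → Wiring
  | 0 => wI
  | n + 1 => wmul F (wpow F n)

/-- Equality of wirings up to renaming of each flow. -/
def WEq (F G : Wiring) : Prop :=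
  (∀ f ∈ F, ∃ g ∈ G, FlowEquiv f g) ∧ ∀ g ∈ G, ∃ f ∈ F, FlowEquiv f g

/-- A fact: a flow of the form `t ⊸ t` with `t` closed. -/
def IsFact (f : UFlow) : Prop := Closed f.1 ∧ f.2 = f.1

/-- Application of a wiring to (the fact associated with) a closed term:
the set of product flows. -/
def appF (F : Wiring) (t : Tm) : Set UFlow := {h | ∃ f ∈ F, IsProd f (t, t) h}

/-- Application of a wiring to a fact, keeping the facts produced. -/
def factApp (F : Wiring) (t : Tm) : Set Tm := {v | ∃ f ∈ F, IsProd f (t, t) (v, v)}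

/-- A wiring is deterministic if it produces at most one fact from any fact. -/
def Deterministic (F : Wiring) : Prop := ∀ t, Closed t → (appF F t).Subsingleton

/-- Two terms are matchable if renamings of them with disjoint variables are unifiable. -/
def Matchable (t u : Tm) : Prop :=
  ∃ (π π' : ℕ ≃ ℕ), tvars (rename π t) ∩ tvars (rename π' u) = ∅ ∧
    ∃ θ, Finitary θ ∧ Unifies θ (rename π t) (rename π' u)

/-- A flow is balanced if each variable has all its occurrences at the same height. -/
def BalancedF (f : UFlow) : Prop :=
  ∀ x, ∀ n ∈ occs x f.1 ++ occs x f.2, ∀ m ∈ occs x f.1 ++ occs x f.2, n = m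

/-- Height of a flow. -/
def heightF (f : UFlow) : ℕ := max f.1.height f.2.height

/-- A wiring is balanced if all its flows are. -/
def BalancedW (F : Wiring) : Prop := ∀ f ∈ F, BalancedF f

/-- Height of a wiring: maximal height of its flows. -/
noncomputable def heightW (F : Wiring) : ℕ := sSup (heightF '' F)

/-- The computation space of a wiring `F`: closed terms (identified with the
corresponding facts) of height at most `heightW F` built using only symbols
(with their arities) occurring in `F` and the constant `⋆` (symbol `0`). -/
noncomputable def compSpace (F : Wiring) : Set Tm :=
  {t | Closed t ∧ t.height ≤ heightW F ∧
    ∀ q ∈ t.symar, q = (0, 0) ∨ ∃ f ∈ F, q ∈ f.1.symar ++ f.2.symar}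

/-- Nilpotency of a wiring: some power is the empty wiring. -/
def Nilpotent (F : Wiring) : Prop := ∃ n, 0 < n ∧ wpow F n = ∅

/-- Edges of the computation graph of `F`: from `u` to `v` iff `v ∈ F u`. -/
noncomputable def Edge (F : Wiring) (u v : Tm) : Prop :=
  u ∈ compSpace F ∧ v ∈ compSpace F ∧ v ∈ factApp F u

/-- Acyclicity of the computation graph of `F`. -/
noncomputable def AcyclicCG (F : Wiring) : Prop :=
  ¬ ∃ n, 0 < n ∧ ∃ c : ℕ → Tm, (∀ i < n, Edge F (c i) (c (i + 1))) ∧ c n = c 0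

/-!
Products of flows are governed by unification. A product `(u ⊸ v)(t ⊸ w)` exists iff `v ≐ t`
has a unifier, and it is unique up to renaming because most general unifiers are unique up to
renaming. Choose representatives `f, g', h'` with pairwise disjoint variables. Computing `(fg)h`
amounts to solving `f.2 ≐ g'.1` and then the instantiated `g'.2 ≐ h'.1`; an MGU of the first
equation followed by an MGU of the second is an MGU of the system `{f.2 ≐ g'.1, g'.2 ≐ h'.1}`.
This needs an MGU that moves only the variables of its equation (the one produced by the
Martelli–Montanari algorithm), so that it leaves `h'` untouched. Hence `(fg)h` is defined iff the
system is unifiable, and it is then the instance of `f.1 ⊸ h'.2` by an MGU of the system.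
Reversing every flow (`(fg)ᵒᵖ = gᵒᵖfᵒᵖ`) turns `f(gh)` into a product of the first shape with
the same system, and the two products agree.
-/
namespace Tm

def size : Tm → ℕ
  | var _ => 1
  | app _ ts => (ts.map size).sum + 1

@[elab_as_elim]
theorem rec' {motive : Tm → Prop} (var : ∀ x, motive (var x))
    (app : ∀ f ts, (∀ t ∈ ts, motive t) → motive (app f ts)) : ∀ t, motive t
  | .var x => var x
  | .app f ts => app f ts fun t _ => rec' var app t

@[simp] theorem subst_var (σ : ℕ → Tm) (x : ℕ) : subst σ (var x) = σ x := by rw [subst]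

@[simp] theorem subst_app (σ : ℕ → Tm) (f : ℕ) (ts : List Tm) :
    subst σ (app f ts) = app f (ts.map (subst σ)) := by
  rw [subst]; congr 1; exact List.attach_map_val

@[simp] theorem size_var (x : ℕ) : size (var x) = 1 := by rw [size]

@[simp] theorem size_app (f : ℕ) (ts : List Tm) : size (app f ts) = (ts.map size).sum + 1 := by
  rw [size]

theorem size_lt_size_app {t : Tm} {ts : List Tm} (f : ℕ) (ht : t ∈ ts) :
    t.size < (app f ts).size := by
  rw [size_app]
  exact Nat.lt_succ_of_le (List.le_sum_of_mem (List.mem_map_of_mem ht))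

end Tm

theorem mem_tvars_var {x y : ℕ} : y ∈ tvars (var x) ↔ y = x := by
  simp [tvars, varsL]

theorem mem_tvars_app {f y : ℕ} {ts : List Tm} : y ∈ tvars (app f ts) ↔ ∃ t ∈ ts, y ∈ tvars t := by
  simp [tvars, varsL]

theorem tvars_finite (t : Tm) : (tvars t).Finite := t.varsL.finite_toSet

theorem subst_congr {σ τ : ℕ → Tm} {t : Tm} (h : ∀ x ∈ tvars t, σ x = τ x) :
    subst σ t = subst τ t := by
  induction t using Tm.rec' with
  | var x => simpa using h x (mem_tvars_var.2 rfl)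
  | app f ts ih =>
    simp only [subst_app, app.injEq, true_and]
    exact List.map_congr_left fun t ht => ih t ht fun x hx => h x (mem_tvars_app.2 ⟨t, ht, hx⟩)

theorem subst_var_self (t : Tm) : subst var t = t := by
  induction t using Tm.rec' with
  | var x => simp
  | app f ts ih =>
    simp only [subst_app, app.injEq, true_and]
    exact (List.map_congr_left ih).trans (List.map_id ts)

/-- Composition of substitutions: `scomp σ τ` applies `τ` first. -/
def scomp (σ τ : ℕ → Tm) : ℕ → Tm := fun x => subst σ (τ x)

theorem subst_scomp (σ τ : ℕ → Tm) (t : Tm) : subst (scomp σ τ) t = subst σ (subst τ t) := by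
  induction t using Tm.rec' with
  | var x => simp [scomp]
  | app f ts ih =>
    simp only [subst_app, List.map_map, app.injEq, true_and]
    exact List.map_congr_left ih

theorem mem_tvars_subst {σ : ℕ → Tm} {t : Tm} {y : ℕ} :
    y ∈ tvars (subst σ t) ↔ ∃ x ∈ tvars t, y ∈ tvars (σ x) := by
  induction t using Tm.rec' with
  | var x => simp [mem_tvars_var]
  | app f ts ih =>
    simp only [subst_app, mem_tvars_app, List.mem_map]
    constructor
    · rintro ⟨-, ⟨t, ht, rfl⟩, hy⟩
      obtain ⟨x, hx, hyx⟩ := (ih t ht).1 hy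
      exact ⟨x, ⟨t, ht, hx⟩, hyx⟩
    · rintro ⟨x, ⟨t, ht, hx⟩, hyx⟩
      exact ⟨_, ⟨t, ht, rfl⟩, (ih t ht).2 ⟨x, hx, hyx⟩⟩

theorem tvars_rename (π : ℕ ≃ ℕ) (t : Tm) : tvars (rename π t) = π '' tvars t := by
  ext y
  simp only [rename, mem_tvars_subst, mem_tvars_var, Set.mem_image]
  constructor <;> rintro ⟨x, hx, rfl⟩ <;> exact ⟨x, hx, rfl⟩

theorem size_le_size_subst {σ : ℕ → Tm} {x : ℕ} {u : Tm} (hx : x ∈ tvars u) :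
    (σ x).size ≤ (subst σ u).size := by
  induction u using Tm.rec' with
  | var y => rw [mem_tvars_var.1 hx, subst_var]
  | app f ts ih =>
    obtain ⟨t, ht, hxt⟩ := mem_tvars_app.1 hx
    rw [subst_app]
    exact (ih t ht hxt).trans (size_lt_size_app f (List.mem_map_of_mem ht)).le

theorem eq_var_of_subst_eq {σ : ℕ → Tm} {x : ℕ} {u : Tm} (h : σ x = subst σ u)
    (hx : x ∈ tvars u) : u = var x := by
  cases u with
  | var y => rw [mem_tvars_var.1 hx]
  | app f ts =>
    obtain ⟨t, ht, hxt⟩ := mem_tvars_app.1 hx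
    have hle := size_le_size_subst (σ := σ) hxt
    have hlt := size_lt_size_app f (List.mem_map_of_mem (f := subst σ) ht)
    rw [← subst_app, ← h] at hlt
    omega

theorem eq_var_of_subst_eq_self {κ : ℕ → Tm} {s : Tm} (h : subst κ s = s) {y : ℕ}
    (hy : y ∈ tvars s) : κ y = var y := by
  induction s using Tm.rec' with
  | var x => rwa [mem_tvars_var.1 hy, ← subst_var κ]
  | app f ts ih =>
    obtain ⟨t, ht, hyt⟩ := mem_tvars_app.1 hy
    simp only [subst_app, app.injEq, true_and] at h
    exact ih t ht (List.map_inj_left.1 (h.trans (List.map_id ts).symm) t ht) hyt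

theorem finitary_var : Finitary var := by
  simp [Finitary]

theorem Finitary.scomp {σ τ : ℕ → Tm} (hσ : Finitary σ) (hτ : Finitary τ) :
    Finitary (scomp σ τ) := by
  refine (hσ.union hτ).subset fun x hx => ?_
  by_contra hx'
  obtain ⟨hσx, hτx⟩ := not_or.1 hx'
  exact hx (by rw [_root_.scomp, not_not.1 hτx, subst_var]; exact not_not.1 hσx)

theorem finitary_update (x : ℕ) (u : Tm) : Finitary (Function.update var x u) :=
  (Set.finite_singleton x).subset fun y hy => by
    by_contra hyx
    exact hy (Function.update_of_ne hyx _ _)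

theorem scomp_update_self {σ : ℕ → Tm} {x : ℕ} {u : Tm} (hx : σ x = subst σ u) :
    scomp σ (Function.update var x u) = σ := by
  funext y
  by_cases hy : y = x
  · subst hy; simp [scomp, hx]
  · simp [scomp, hy]

def SupportedIn (θ : ℕ → Tm) (S : Set ℕ) : Prop :=
  (∀ x ∉ S, θ x = var x) ∧ ∀ x ∈ S, tvars (θ x) ⊆ S

theorem supportedIn_var (S : Set ℕ) : SupportedIn var S :=
  ⟨fun _ _ => rfl, fun _ hx _ hy => mem_tvars_var.1 hy ▸ hx⟩

theorem supportedIn_update {x : ℕ} {u : Tm} {S : Set ℕ} (hx : x ∈ S) (hu : tvars u ⊆ S) :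
    SupportedIn (Function.update var x u) S := by
  refine ⟨fun y hy => Function.update_of_ne (fun h : y = x => hy (h ▸ hx)) _ _, fun y hy => ?_⟩
  by_cases hyx : y = x
  · subst hyx; simpa using hu
  · intro z hz
    rw [Function.update_of_ne hyx, mem_tvars_var] at hz
    exact hz ▸ hy

namespace SupportedIn

variable {θ σ τ : ℕ → Tm} {S T : Set ℕ}

theorem mono (h : SupportedIn θ S) (hST : S ⊆ T) : SupportedIn θ T := by
  refine ⟨fun x hx => h.1 x fun hxS => hx (hST hxS), fun x hxT => ?_⟩
  by_cases hxS : x ∈ S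
  · exact (h.2 x hxS).trans hST
  · intro y hy
    rw [h.1 x hxS, mem_tvars_var] at hy
    exact hy ▸ hxT

theorem tvars_subst_subset (h : SupportedIn θ S) (t : Tm) : tvars (subst θ t) ⊆ S ∪ tvars t := by
  intro y hy
  obtain ⟨x, hx, hyx⟩ := mem_tvars_subst.1 hy
  by_cases hxS : x ∈ S
  · exact Or.inl (h.2 x hxS hyx)
  · rw [h.1 x hxS, mem_tvars_var] at hyx
    exact Or.inr (hyx ▸ hx)

theorem subst_eq_self (h : SupportedIn θ S) {t : Tm} (ht : Disjoint (tvars t) S) :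
    subst θ t = t :=
  (subst_congr fun x hx => h.1 x (Set.disjoint_left.1 ht hx)).trans (subst_var_self t)

theorem scomp (hσ : SupportedIn σ S) (hτ : SupportedIn τ S) : SupportedIn (scomp σ τ) S := by
  refine ⟨fun x hx => by simp [_root_.scomp, hτ.1 x hx, hσ.1 x hx], fun x hx => ?_⟩
  exact (hσ.tvars_subst_subset (τ x)).trans (Set.union_subset subset_rfl (hτ.2 x hx))

end SupportedIn

def UnifiesAll (σ : ℕ → Tm) (E : List (Tm × Tm)) : Prop := ∀ e ∈ E, subst σ e.1 = subst σ e.2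

def Unifiable (E : List (Tm × Tm)) : Prop := ∃ σ, Finitary σ ∧ UnifiesAll σ E

def IsMGUAll (θ : ℕ → Tm) (E : List (Tm × Tm)) : Prop :=
  Finitary θ ∧ UnifiesAll θ E ∧
    ∀ σ, Finitary σ → UnifiesAll σ E → ∃ ρ, Finitary ρ ∧ ∀ x, σ x = subst ρ (θ x)

def eqVars (E : List (Tm × Tm)) : Set ℕ := {x | ∃ e ∈ E, x ∈ tvars e.1 ∨ x ∈ tvars e.2}

def eqSize (E : List (Tm × Tm)) : ℕ := (E.map fun e => e.1.size + e.2.size).sum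

def substEqs (σ : ℕ → Tm) (E : List (Tm × Tm)) : List (Tm × Tm) :=
  E.map fun e => (subst σ e.1, subst σ e.2)

theorem isMGU_iff_isMGUAll {θ : ℕ → Tm} {t u : Tm} : IsMGU θ t u ↔ IsMGUAll θ [(t, u)] := by
  simp [IsMGU, IsMGUAll, UnifiesAll, Unifies]

theorem unifiesAll_substEqs {σ τ : ℕ → Tm} {E : List (Tm × Tm)} :
    UnifiesAll σ (substEqs τ E) ↔ UnifiesAll (scomp σ τ) E := by
  simp only [UnifiesAll, substEqs, List.forall_mem_map, subst_scomp]

theorem Unifiable.imp {E E' : List (Tm × Tm)} (h : ∀ σ, UnifiesAll σ E → UnifiesAll σ E')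
    (hE : Unifiable E) : Unifiable E' :=
  let ⟨σ, hσ, hu⟩ := hE; ⟨σ, hσ, h σ hu⟩

theorem IsMGUAll.unifiable {θ : ℕ → Tm} {E : List (Tm × Tm)} (h : IsMGUAll θ E) : Unifiable E :=
  ⟨θ, h.1, h.2.1⟩

theorem isMGUAll_congr {θ : ℕ → Tm} {E E' : List (Tm × Tm)}
    (h : ∀ σ, UnifiesAll σ E ↔ UnifiesAll σ E') : IsMGUAll θ E ↔ IsMGUAll θ E' := by
  simp only [IsMGUAll, h]

theorem eqVars_finite (E : List (Tm × Tm)) : (eqVars E).Finite := by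
  refine ((E.flatMap fun e => e.1.varsL ++ e.2.varsL).finite_toSet).subset ?_
  rintro x ⟨e, he, hx⟩
  simpa only [List.mem_flatMap, List.mem_append] using ⟨e, he, hx⟩

theorem mem_eqVars_cons {x : ℕ} {e : Tm × Tm} {E : List (Tm × Tm)} :
    x ∈ eqVars (e :: E) ↔ x ∈ tvars e.1 ∨ x ∈ tvars e.2 ∨ x ∈ eqVars E := by
  simp [eqVars, or_assoc]

theorem isMGUAll_nil : IsMGUAll var [] :=
  ⟨finitary_var, by simp [UnifiesAll], fun σ hσ _ => ⟨σ, hσ, by simp⟩⟩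

theorem unifiesAll_cons_swap {σ : ℕ → Tm} {t u : Tm} {E : List (Tm × Tm)} :
    UnifiesAll σ ((u, t) :: E) ↔ UnifiesAll σ ((t, u) :: E) := by
  simp only [UnifiesAll, List.forall_mem_cons, eq_comm]

theorem eqVars_cons_swap (t u : Tm) (E : List (Tm × Tm)) :
    eqVars ((u, t) :: E) = eqVars ((t, u) :: E) := by
  ext x
  simp only [mem_eqVars_cons, ← or_assoc, or_comm (a := x ∈ tvars u)]

section Elimination

variable {x : ℕ} {u : Tm} {E : List (Tm × Tm)}

theorem unifiesAll_cons_var_iff {σ : ℕ → Tm} :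
    UnifiesAll σ ((var x, u) :: E) ↔
      σ x = subst σ u ∧ UnifiesAll σ (substEqs (Function.update var x u) E) := by
  rw [UnifiesAll, List.forall_mem_cons, subst_var]
  refine and_congr_right fun hx => ?_
  rw [unifiesAll_substEqs, scomp_update_self hx]
  rfl

theorem IsMGUAll.cons_var {θ : ℕ → Tm} (hx : x ∉ tvars u)
    (h : IsMGUAll θ (substEqs (Function.update var x u) E)) :
    IsMGUAll (scomp θ (Function.update var x u)) ((var x, u) :: E) := by
  have hu : subst (Function.update var x u) u = u :=
    (subst_congr fun y hy => Function.update_of_ne (ne_of_mem_of_not_mem hy hx) _ _).trans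
      (subst_var_self u)
  obtain ⟨hfin, huni, hgen⟩ := h
  refine ⟨hfin.scomp (finitary_update x u), List.forall_mem_cons.2 ⟨?_, unifiesAll_substEqs.1 huni⟩,
    fun σ hσ hσE => ?_⟩
  · simp [subst_scomp, hu, scomp]
  obtain ⟨hσx, hσE'⟩ := unifiesAll_cons_var_iff.1 hσE
  obtain ⟨ρ, hρ, hσρ⟩ := hgen σ hσ hσE'
  refine ⟨ρ, hρ, fun y => ?_⟩
  rw [← congrFun (scomp_update_self hσx) y, scomp, scomp, ← subst_scomp]
  exact subst_congr fun z _ => hσρ z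

theorem mem_tvars_subst_update {t : Tm} {y : ℕ}
    (hy : y ∈ tvars (subst (Function.update var x u) t)) :
    (y ∈ tvars t ∧ y ≠ x) ∨ y ∈ tvars u := by
  obtain ⟨z, hz, hyz⟩ := mem_tvars_subst.1 hy
  by_cases hzx : z = x
  · subst hzx
    simp only [Function.update_self] at hyz
    exact Or.inr hyz
  · rw [Function.update_of_ne hzx, mem_tvars_var] at hyz
    exact Or.inl ⟨hyz ▸ hz, hyz ▸ hzx⟩

theorem eqVars_substEqs_update_subset (hx : x ∉ tvars u) :
    eqVars (substEqs (Function.update var x u) E) ⊆ eqVars ((var x, u) :: E) \ {x} := by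
  rintro y ⟨e', he', hy⟩
  obtain ⟨e, he, rfl⟩ := List.mem_map.1 he'
  have hy' : ((y ∈ tvars e.1 ∨ y ∈ tvars e.2) ∧ y ≠ x) ∨ y ∈ tvars u := by
    rcases hy with hy | hy <;> rcases mem_tvars_subst_update hy with ⟨hy, hyx⟩ | hy <;> tauto
  rcases hy' with ⟨hy, hyx⟩ | hy
  · exact ⟨mem_eqVars_cons.2 (Or.inr (Or.inr ⟨e, he, hy⟩)), hyx⟩
  · exact ⟨mem_eqVars_cons.2 (Or.inr (Or.inl hy)), fun hyx => hx (hyx ▸ hy)⟩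

theorem ncard_eqVars_substEqs_lt (hx : x ∉ tvars u) :
    (eqVars (substEqs (Function.update var x u) E)).ncard < (eqVars ((var x, u) :: E)).ncard :=
  (Set.ncard_le_ncard (eqVars_substEqs_update_subset hx) (eqVars_finite _).sdiff).trans_lt
    (Set.ncard_sdiff_singleton_lt_of_mem (mem_eqVars_cons.2 (Or.inl (mem_tvars_var.2 rfl)))
      (eqVars_finite _))

theorem exists_isMGUAll_cons_var (hx : x ∉ tvars u)
    (ih : ∃ θ, IsMGUAll θ (substEqs (Function.update var x u) E) ∧
      SupportedIn θ (eqVars (substEqs (Function.update var x u) E))) :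
    ∃ θ, IsMGUAll θ ((var x, u) :: E) ∧ SupportedIn θ (eqVars ((var x, u) :: E)) := by
  obtain ⟨θ, hθ, hs⟩ := ih
  refine ⟨_, hθ.cons_var hx, SupportedIn.scomp ?_ ?_⟩
  · exact hs.mono ((eqVars_substEqs_update_subset hx).trans Set.sdiff_subset)
  · exact supportedIn_update (mem_eqVars_cons.2 (Or.inl (mem_tvars_var.2 rfl)))
      fun y hy => mem_eqVars_cons.2 (Or.inr (Or.inl hy))

end Elimination

section Decomposition

variable {f : ℕ} {ts us : List Tm} {E : List (Tm × Tm)}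

theorem unifiesAll_cons_app {σ : ℕ → Tm} (h : ts.length = us.length) :
    UnifiesAll σ ((app f ts, app f us) :: E) ↔ UnifiesAll σ (ts.zip us ++ E) := by
  simp only [UnifiesAll, List.forall_mem_cons, List.forall_mem_append, subst_app, app.injEq,
    true_and]
  refine and_congr_left fun _ => ?_
  rw [← List.forall₂_eq_eq_eq, List.forall₂_map_left_iff, List.forall₂_map_right_iff,
    List.forall₂_iff_zip]
  simp [h]

theorem Unifiable.eq_of_cons_app {g : ℕ} (hE : Unifiable ((app f ts, app g us) :: E)) :
    f = g ∧ ts.length = us.length := by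
  obtain ⟨σ, -, hσ⟩ := hE
  have := hσ _ List.mem_cons_self
  simp only [subst_app, app.injEq] at this
  exact ⟨this.1, by simpa using congrArg List.length this.2⟩

theorem eqVars_zip_append_subset {g : ℕ} :
    eqVars (ts.zip us ++ E) ⊆ eqVars ((app f ts, app g us) :: E) := by
  rintro y ⟨e, he, hy⟩
  rcases List.mem_append.1 he with he | he
  · obtain ⟨h₁, h₂⟩ := List.of_mem_zip he
    exact mem_eqVars_cons.2 (hy.imp (fun hy => mem_tvars_app.2 ⟨_, h₁, hy⟩)
      fun hy => Or.inl (mem_tvars_app.2 ⟨_, h₂, hy⟩))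
  · exact mem_eqVars_cons.2 (Or.inr (Or.inr ⟨e, he, hy⟩))

theorem eqSize_zip_le (ts us : List Tm) :
    eqSize (ts.zip us) ≤ (ts.map size).sum + (us.map size).sum := by
  induction ts generalizing us with
  | nil => simp [eqSize]
  | cons t ts ih =>
    cases us with
    | nil => simp [eqSize]
    | cons u us =>
      have := ih us
      simp only [eqSize, List.zip_cons_cons, List.map_cons, List.sum_cons] at this ⊢
      omega

theorem exists_isMGUAll_cons_app (h : ts.length = us.length)
    (ih : ∃ θ, IsMGUAll θ (ts.zip us ++ E) ∧ SupportedIn θ (eqVars (ts.zip us ++ E))) :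
    ∃ θ, IsMGUAll θ ((app f ts, app f us) :: E) ∧
      SupportedIn θ (eqVars ((app f ts, app f us) :: E)) :=
  let ⟨θ, hθ, hs⟩ := ih
  ⟨θ, (isMGUAll_congr fun _ => unifiesAll_cons_app h).2 hθ, hs.mono eqVars_zip_append_subset⟩

end Decomposition

theorem exists_isMGUAll_cons_self {t : Tm} {E : List (Tm × Tm)}
    (ih : ∃ θ, IsMGUAll θ E ∧ SupportedIn θ (eqVars E)) :
    ∃ θ, IsMGUAll θ ((t, t) :: E) ∧ SupportedIn θ (eqVars ((t, t) :: E)) :=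
  let ⟨θ, hθ, hs⟩ := ih
  ⟨θ, (isMGUAll_congr fun _ => by simp [UnifiesAll]).2 hθ,
    hs.mono fun _ hy => mem_eqVars_cons.2 (Or.inr (Or.inr hy))⟩

/-- The Martelli–Montanari algorithm: eliminating a variable lowers the number of variables,
deleting a trivial equation or decomposing `f(ts) ≐ f(us)` lowers the total size. -/
theorem exists_isMGUAll_supportedIn : ∀ E : List (Tm × Tm), Unifiable E →
    ∃ θ, IsMGUAll θ E ∧ SupportedIn θ (eqVars E)
  | [], _ => ⟨var, isMGUAll_nil, supportedIn_var _⟩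
  | (var x, u) :: E, hE => by
    by_cases hu : u = var x
    · have hle : (eqVars E).ncard ≤ (eqVars ((var x, u) :: E)).ncard :=
        Set.ncard_le_ncard (fun y hy => mem_eqVars_cons.2 (Or.inr (Or.inr hy))) (eqVars_finite _)
      have hdec : eqSize E < eqSize ((var x, u) :: E) := by
        simp only [eqSize, List.map_cons, List.sum_cons, size_var]
        omega
      have ih := exists_isMGUAll_supportedIn E
        (hE.imp fun σ h e he => h e (List.mem_cons_of_mem _ he))
      subst hu
      exact exists_isMGUAll_cons_self ih
    · have hx : x ∉ tvars u := fun hx =>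
        hu (eq_var_of_subst_eq (unifiesAll_cons_var_iff.1 hE.choose_spec.2).1 hx)
      have hdec := ncard_eqVars_substEqs_lt (E := E) hx
      exact exists_isMGUAll_cons_var hx
        (exists_isMGUAll_supportedIn _ (hE.imp fun σ h => (unifiesAll_cons_var_iff.1 h).2))
  | (app f ts, var x) :: E, hE => by
    have hE' := hE.imp fun σ => unifiesAll_cons_swap.2
    have hx : x ∉ tvars (app f ts) := fun hx =>
      Tm.noConfusion (eq_var_of_subst_eq (unifiesAll_cons_var_iff.1 hE'.choose_spec.2).1 hx)
    have hdec : (eqVars (substEqs (Function.update var x (app f ts)) E)).ncard <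
        (eqVars ((app f ts, var x) :: E)).ncard := by
      rw [eqVars_cons_swap]
      exact ncard_eqVars_substEqs_lt hx
    obtain ⟨θ, hθ, hs⟩ := exists_isMGUAll_cons_var hx
      (exists_isMGUAll_supportedIn _ (hE'.imp fun σ h => (unifiesAll_cons_var_iff.1 h).2))
    exact ⟨θ, (isMGUAll_congr fun σ => unifiesAll_cons_swap).2 hθ,
      eqVars_cons_swap (var x) (app f ts) E ▸ hs⟩
  | (app f ts, app g us) :: E, hE => by
    obtain ⟨hfg, hlen⟩ := hE.eq_of_cons_app
    have hdec : eqSize (ts.zip us ++ E) < eqSize ((app f ts, app g us) :: E) := by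
      have := eqSize_zip_le ts us
      simp only [eqSize, List.map_append, List.sum_append, List.map_cons, List.sum_cons,
        size_app] at this ⊢
      omega
    have hle := Set.ncard_le_ncard (eqVars_zip_append_subset (ts := ts) (us := us) (E := E)
      (f := f) (g := g)) (eqVars_finite _)
    have ih := exists_isMGUAll_supportedIn (ts.zip us ++ E)
      (hE.imp fun σ => hfg ▸ (unifiesAll_cons_app hlen).1)
    subst hfg
    exact exists_isMGUAll_cons_app hlen ih
termination_by E => ((eqVars E).ncard, eqSize E)
decreasing_by
  all_goals first
    | exact Prod.Lex.left _ _ hdec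
    | exact Prod.lex_def.2 ((Nat.lt_or_eq_of_le hle).imp id fun h => ⟨h, hdec⟩)

theorem IsMGUAll.append {θ₁ θ₂ : ℕ → Tm} {E₁ E₂ : List (Tm × Tm)} (h₁ : IsMGUAll θ₁ E₁)
    (h₂ : IsMGUAll θ₂ (substEqs θ₁ E₂)) : IsMGUAll (scomp θ₂ θ₁) (E₁ ++ E₂) := by
  refine ⟨h₂.1.scomp h₁.1, List.forall_mem_append.2 ⟨fun e he => ?_, unifiesAll_substEqs.1 h₂.2.1⟩,
    fun σ hσ hσE => ?_⟩
  · rw [subst_scomp, subst_scomp, h₁.2.1 e he]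
  obtain ⟨hσ₁, hσ₂⟩ := List.forall_mem_append.1 hσE
  obtain ⟨ρ, hρ, hσρ⟩ := h₁.2.2 σ hσ hσ₁
  obtain rfl : σ = scomp ρ θ₁ := funext hσρ
  obtain ⟨ρ', hρ', hρρ'⟩ := h₂.2.2 ρ hρ (unifiesAll_substEqs.2 hσ₂)
  obtain rfl : ρ = scomp ρ' θ₂ := funext hρρ'
  exact ⟨ρ', hρ', fun x => subst_scomp _ _ _⟩

theorem IsMGUAll.unifiable_substEqs {θ : ℕ → Tm} {E₁ E₂ : List (Tm × Tm)} (h : IsMGUAll θ E₁)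
    (hE : Unifiable (E₁ ++ E₂)) : Unifiable (substEqs θ E₂) := by
  obtain ⟨σ, hσ, hσE⟩ := hE
  obtain ⟨hσ₁, hσ₂⟩ := List.forall_mem_append.1 hσE
  obtain ⟨ρ, hρ, hσρ⟩ := h.2.2 σ hσ hσ₁
  obtain rfl : σ = scomp ρ θ := funext hσρ
  exact ⟨ρ, hρ, unifiesAll_substEqs.2 hσ₂⟩

def substF (θ : ℕ → Tm) (a : UFlow) : UFlow := (subst θ a.1, subst θ a.2)

theorem substF_scomp (σ τ : ℕ → Tm) (a : UFlow) : substF (scomp σ τ) a = substF σ (substF τ a) := by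
  simp [substF, subst_scomp]

theorem flowVars_finite (a : UFlow) : (flowVars a).Finite :=
  (tvars_finite a.1).union (tvars_finite a.2)

theorem SupportedIn.flowVars_substF_subset {θ : ℕ → Tm} {S : Set ℕ} (h : SupportedIn θ S)
    (a : UFlow) : flowVars (substF θ a) ⊆ S ∪ flowVars a :=
  Set.union_subset
    ((h.tvars_subst_subset a.1).trans (Set.union_subset_union_right _ Set.subset_union_left))
    ((h.tvars_subst_subset a.2).trans (Set.union_subset_union_right _ Set.subset_union_right))

theorem SupportedIn.substF_eq_self {θ : ℕ → Tm} {S : Set ℕ} (h : SupportedIn θ S) {a : UFlow}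
    (ha : Disjoint (flowVars a) S) : substF θ a = a :=
  Prod.ext (h.subst_eq_self (ha.mono_left Set.subset_union_left))
    (h.subst_eq_self (ha.mono_left Set.subset_union_right))

theorem Set.InjOn.exists_perm_eqOn {α : Type*} {S : Set α} {φ : α → α} (h : S.InjOn φ)
    (hS : S.Finite) : ∃ π : Equiv.Perm α, S.EqOn π φ := by
  have := hS.to_subtype
  obtain ⟨π, hπ⟩ := Equiv.Perm.exists_extending_pair (Subtype.val : S → α) (S.domRestrict φ)
    Subtype.val_injective h.injective
  exact ⟨π, fun x hx => hπ ⟨x, hx⟩⟩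

theorem rename_refl (t : Tm) : rename (Equiv.refl ℕ) t = t := subst_var_self t

theorem rename_rename (π π' : ℕ ≃ ℕ) (t : Tm) :
    rename π' (rename π t) = rename (π.trans π') t := by
  rw [rename, rename, rename, ← subst_scomp]
  congr 1
  funext x
  simp [scomp]

theorem flowVars_swap (a : UFlow) : flowVars a.swap = flowVars a := Set.union_comm _ _

namespace FlowEquiv

variable {a b c : UFlow}

theorem refl (a : UFlow) : FlowEquiv a a := ⟨Equiv.refl ℕ, rename_refl _, rename_refl _⟩

theorem symm (h : FlowEquiv a b) : FlowEquiv b a := by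
  obtain ⟨π, h₁, h₂⟩ := h
  refine ⟨π.symm, ?_, ?_⟩
  · rw [← h₁, rename_rename, Equiv.self_trans_symm, rename_refl]
  · rw [← h₂, rename_rename, Equiv.self_trans_symm, rename_refl]

theorem trans (h : FlowEquiv a b) (h' : FlowEquiv b c) : FlowEquiv a c := by
  obtain ⟨π, h₁, h₂⟩ := h
  obtain ⟨π', h₁', h₂'⟩ := h'
  exact ⟨π.trans π', by rw [← rename_rename, h₁, h₁'], by rw [← rename_rename, h₂, h₂']⟩

theorem swap (h : FlowEquiv a b) : FlowEquiv a.swap b.swap :=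
  let ⟨π, h₁, h₂⟩ := h
  ⟨π, h₂, h₁⟩

end FlowEquiv

theorem flowEquiv_of_substF_eq {ρ ρ' : ℕ → Tm} {a b : UFlow} (h : substF ρ a = b)
    (h' : substF ρ' b = a) : FlowEquiv a b := by
  have hback : ∀ y ∈ flowVars a, subst ρ' (ρ y) = var y := by
    have ha : substF (scomp ρ' ρ) a = a := by rw [substF_scomp, h, h']
    rintro y (hy | hy)
    · exact eq_var_of_subst_eq_self (congrArg Prod.fst ha) hy
    · exact eq_var_of_subst_eq_self (congrArg Prod.snd ha) hy
  have hvar : ∀ y ∈ flowVars a, ∃ z, ρ y = var z := by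
    intro y hy
    cases hρy : ρ y with
    | var z => exact ⟨z, rfl⟩
    | app f ts =>
      have := hback y hy
      rw [hρy, subst_app] at this
      exact Tm.noConfusion this
  choose! φ hφ using hvar
  have hinj : (flowVars a).InjOn φ := fun y₁ h₁ y₂ h₂ he => by
    have e₁ := hback y₁ h₁
    have e₂ := hback y₂ h₂
    rw [hφ y₁ h₁, he, ← hφ y₂ h₂, e₂] at e₁
    exact (var.inj e₁).symm
  obtain ⟨π, hπ⟩ := hinj.exists_perm_eqOn (flowVars_finite a)
  have hren : ∀ t, tvars t ⊆ flowVars a → rename π t = subst ρ t := fun t ht =>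
    subst_congr fun x hx => by rw [hπ (ht hx), ← hφ x (ht hx)]
  exact ⟨π, (hren a.1 Set.subset_union_left).trans (congrArg Prod.fst h),
    (hren a.2 Set.subset_union_right).trans (congrArg Prod.snd h)⟩

theorem exists_flowEquiv_disjoint (a : UFlow) {S : Set ℕ} (hS : S.Finite) :
    ∃ a', FlowEquiv a a' ∧ Disjoint (flowVars a') S := by
  obtain ⟨N, hN⟩ := hS.bddAbove
  obtain ⟨π, hπ⟩ := (add_left_injective (N + 1)).injOn.exists_perm_eqOn (flowVars_finite a)
  refine ⟨(rename π a.1, rename π a.2), ⟨π, rfl, rfl⟩, ?_⟩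
  have himage : flowVars (rename π a.1, rename π a.2) = π '' flowVars a := by
    simp only [flowVars, tvars_rename, Set.image_union]
  rw [himage, Set.disjoint_left]
  rintro _ ⟨x, hx, rfl⟩ hxS
  have hle : π x ≤ N := hN hxS
  rw [hπ hx] at hle
  dsimp only at hle
  omega

theorem exists_finitary_substF_eq {f₁ f₂ g₁ g₂ : UFlow} (ef : FlowEquiv f₁ f₂)
    (eg : FlowEquiv g₁ g₂) (hd : Disjoint (flowVars f₁) (flowVars g₁)) :
    ∃ κ, Finitary κ ∧ substF κ f₁ = f₂ ∧ substF κ g₁ = g₂ := by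
  classical
  obtain ⟨π, hf₁, hf₂⟩ := ef
  obtain ⟨π', hg₁, hg₂⟩ := eg
  let κ : ℕ → Tm := fun x =>
    if x ∈ flowVars f₁ then var (π x) else if x ∈ flowVars g₁ then var (π' x) else var x
  have hκf : ∀ x ∈ flowVars f₁, κ x = var (π x) := fun x hx => if_pos hx
  have hκg : ∀ x ∈ flowVars g₁, κ x = var (π' x) := fun x hx => by
    simp [κ, hx, Set.disjoint_right.1 hd hx]
  refine ⟨κ, ((flowVars_finite f₁).union (flowVars_finite g₁)).subset fun x hx => ?_, ?_, ?_⟩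
  · by_contra hx'
    obtain ⟨hxf, hxg⟩ := not_or.1 hx'
    exact hx (by simp [κ, hxf, hxg])
  · exact Prod.ext ((subst_congr fun x hx => hκf x (Or.inl hx)).trans hf₁)
      ((subst_congr fun x hx => hκf x (Or.inr hx)).trans hf₂)
  · exact Prod.ext ((subst_congr fun x hx => hκg x (Or.inl hx)).trans hg₁)
      ((subst_congr fun x hx => hκg x (Or.inr hx)).trans hg₂)

theorem IsMGU.symm {θ : ℕ → Tm} {t u : Tm} (h : IsMGU θ t u) : IsMGU θ u t :=
  ⟨h.1, h.2.1.symm, fun σ hσ hu => h.2.2 σ hσ hu.symm⟩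

theorem IsMGUAll.flowEquiv {Θ Θ' : ℕ → Tm} {E : List (Tm × Tm)} (h : IsMGUAll Θ E)
    (h' : IsMGUAll Θ' E) (a : UFlow) : FlowEquiv (substF Θ a) (substF Θ' a) := by
  obtain ⟨ρ, -, hρ⟩ := h.2.2 Θ' h'.1 h'.2.1
  obtain ⟨ρ', -, hρ'⟩ := h'.2.2 Θ h.1 h.2.1
  refine flowEquiv_of_substF_eq (ρ := ρ) (ρ' := ρ') ?_ ?_
  · rw [← substF_scomp, show scomp ρ Θ = Θ' from (funext hρ).symm]
  · rw [← substF_scomp, show scomp ρ' Θ' = Θ from (funext hρ').symm]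

theorem isProd_of_isMGUAll {f g f' g' : UFlow} {θ : ℕ → Tm} (ef : FlowEquiv f f')
    (eg : FlowEquiv g g') (hd : Disjoint (flowVars f') (flowVars g'))
    (hθ : IsMGUAll θ [(f'.2, g'.1)]) : IsProd f g (substF θ (f'.1, g'.2)) :=
  ⟨f', g', θ, ef, eg, Set.disjoint_iff_inter_eq_empty.1 hd, isMGU_iff_isMGUAll.2 hθ, rfl⟩

namespace IsProd

variable {f g p f' g' : UFlow}

theorem congr_left (e : FlowEquiv f f') (hp : IsProd f g p) : IsProd f' g p := by
  obtain ⟨f₁, g₁, θ, e₁, e₂, hd, hθ, rfl⟩ := hp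
  exact ⟨f₁, g₁, θ, e.symm.trans e₁, e₂, hd, hθ, rfl⟩

theorem congr_right (e : FlowEquiv g g') (hp : IsProd f g p) : IsProd f g' p := by
  obtain ⟨f₁, g₁, θ, e₁, e₂, hd, hθ, rfl⟩ := hp
  exact ⟨f₁, g₁, θ, e₁, e.symm.trans e₂, hd, hθ, rfl⟩

theorem swap (hp : IsProd f g p) : IsProd g.swap f.swap p.swap := by
  obtain ⟨f₁, g₁, θ, e₁, e₂, hd, hθ, rfl⟩ := hp
  refine ⟨g₁.swap, f₁.swap, θ, e₂.swap, e₁.swap, ?_, hθ.symm, rfl⟩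
  rwa [flowVars_swap, flowVars_swap, Set.inter_comm]

theorem unifiable (hp : IsProd f g p) (ef : FlowEquiv f f') (eg : FlowEquiv g g')
    (hd : Disjoint (flowVars f') (flowVars g')) : Unifiable [(f'.2, g'.1)] := by
  obtain ⟨f₁, g₁, θ, e₁, e₂, -, hθ, -⟩ := hp
  obtain ⟨κ, hκ, hκf, hκg⟩ := exists_finitary_substF_eq (ef.symm.trans e₁) (eg.symm.trans e₂) hd
  have hf : subst κ f'.2 = f₁.2 := congrArg Prod.snd hκf
  have hg : subst κ g'.1 = g₁.1 := congrArg Prod.fst hκg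
  refine ⟨scomp θ κ, hθ.1.scomp hκ, List.forall_mem_singleton.2 ?_⟩
  rw [subst_scomp, subst_scomp, hf, hg]
  exact hθ.2.1

theorem exists_substF_eq {p' : UFlow} (hp : IsProd f g p) (hp' : IsProd f g p') :
    ∃ ρ, substF ρ p = p' := by
  obtain ⟨f₁, g₁, θ, e₁, e₂, hd, hθ, rfl⟩ := hp
  obtain ⟨f₂, g₂, θ', e₁', e₂', -, hθ', rfl⟩ := hp'
  obtain ⟨κ, hκ, hκf, hκg⟩ := exists_finitary_substF_eq (e₁.symm.trans e₁') (e₂.symm.trans e₂')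
    (Set.disjoint_iff_inter_eq_empty.2 hd)
  have hf₁ : subst κ f₁.1 = f₂.1 := congrArg Prod.fst hκf
  have hf₂ : subst κ f₁.2 = f₂.2 := congrArg Prod.snd hκf
  have hg₁ : subst κ g₁.1 = g₂.1 := congrArg Prod.fst hκg
  have hg₂ : subst κ g₁.2 = g₂.2 := congrArg Prod.snd hκg
  have hu : Unifies (scomp θ' κ) f₁.2 g₁.1 := by
    rw [Unifies, subst_scomp, subst_scomp, hf₂, hg₁]
    exact hθ'.2.1
  have hκp : substF κ (f₁.1, g₁.2) = (f₂.1, g₂.2) := by simp only [substF, hf₁, hg₂]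
  obtain ⟨ρ, -, hρ⟩ := hθ.2.2 _ (hθ'.1.scomp hκ) hu
  refine ⟨ρ, ?_⟩
  change substF ρ (substF θ (f₁.1, g₁.2)) = substF θ' (f₂.1, g₂.2)
  rw [← substF_scomp, show scomp ρ θ = scomp θ' κ from (funext hρ).symm, substF_scomp, hκp]

theorem flowEquiv {p' : UFlow} (hp : IsProd f g p) (hp' : IsProd f g p') : FlowEquiv p p' :=
  flowEquiv_of_substF_eq (hp.exists_substF_eq hp').choose_spec
    (hp'.exists_substF_eq hp).choose_spec

end IsProd

section Substituted

variable {θ : ℕ → Tm} {E : List (Tm × Tm)} {a b : UFlow}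

theorem IsProd.exists_isMGUAll_append {q : UFlow} (hθ : IsMGUAll θ E)
    (hd : Disjoint (flowVars (substF θ a)) (flowVars (substF θ b)))
    (hq : IsProd (substF θ a) (substF θ b) q) :
    ∃ Θ, IsMGUAll Θ (E ++ [(a.2, b.1)]) ∧ FlowEquiv q (substF Θ (a.1, b.2)) := by
  obtain ⟨θ₂, hθ₂, -⟩ :=
    exists_isMGUAll_supportedIn _ (hq.unifiable (.refl _) (.refl _) hd)
  refine ⟨scomp θ₂ θ, hθ.append hθ₂, ?_⟩
  rw [substF_scomp]
  exact hq.flowEquiv (isProd_of_isMGUAll (.refl _) (.refl _) hd hθ₂)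

theorem exists_isProd_substF (hθ : IsMGUAll θ E)
    (hd : Disjoint (flowVars (substF θ a)) (flowVars (substF θ b)))
    (hE : Unifiable (E ++ [(a.2, b.1)])) : ∃ q, IsProd (substF θ a) (substF θ b) q := by
  obtain ⟨θ₂, hθ₂, -⟩ := exists_isMGUAll_supportedIn _ (hθ.unifiable_substEqs hE)
  exact ⟨_, isProd_of_isMGUAll (.refl _) (.refl _) hd hθ₂⟩

end Substituted

/-- The equations solved by both `(f g) h` and `f (g h)` when `f, g, h` have pairwise disjoint
variables. -/
def chainEqs (f g h : UFlow) : List (Tm × Tm) := [(f.2, g.1), (g.2, h.1)]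

theorem unifiesAll_chainEqs_swap {σ : ℕ → Tm} {f g h : UFlow} :
    UnifiesAll σ (chainEqs h.swap g.swap f.swap) ↔ UnifiesAll σ (chainEqs f g h) := by
  simp only [UnifiesAll, chainEqs, List.forall_mem_cons, Prod.fst_swap, Prod.snd_swap, eq_comm]
  tauto

def DisjointReps (f g h f' g' h' : UFlow) : Prop :=
  FlowEquiv f f' ∧ FlowEquiv g g' ∧ FlowEquiv h h' ∧ Disjoint (flowVars f') (flowVars g') ∧
    Disjoint (flowVars f') (flowVars h') ∧ Disjoint (flowVars g') (flowVars h')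

theorem exists_disjointReps (f g h : UFlow) : ∃ g' h', DisjointReps f g h f g' h' := by
  obtain ⟨g', eg, dgf⟩ := exists_flowEquiv_disjoint g (flowVars_finite f)
  obtain ⟨h', eh, dh⟩ :=
    exists_flowEquiv_disjoint h ((flowVars_finite f).union (flowVars_finite g'))
  obtain ⟨dhf, dhg⟩ := Set.disjoint_union_right.1 dh
  exact ⟨g', h', .refl f, eg, eh, dgf.symm, dhf.symm, dhg.symm⟩

namespace DisjointReps

variable {f g h f' g' h' : UFlow}

theorem swap (hR : DisjointReps f g h f' g' h') :
    DisjointReps h.swap g.swap f.swap h'.swap g'.swap f'.swap := by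
  obtain ⟨ef, eg, eh, dfg, dfh, dgh⟩ := hR
  simp only [DisjointReps, flowVars_swap]
  exact ⟨eh.swap, eg.swap, ef.swap, dgh.symm, dfh.symm, dfg.symm⟩

theorem substF_eq_self_and_disjoint (hR : DisjointReps f g h f' g' h') {θ : ℕ → Tm}
    (hs : SupportedIn θ (eqVars [(f'.2, g'.1)])) :
    substF θ h' = h' ∧ Disjoint (flowVars (substF θ (f'.1, g'.2))) (flowVars (substF θ h')) := by
  obtain ⟨-, -, -, -, dfh, dgh⟩ := hR
  have hS : eqVars [(f'.2, g'.1)] ⊆ flowVars f' ∪ flowVars g' := by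
    rintro x ⟨e, he, hx⟩
    obtain rfl := List.mem_singleton.1 he
    exact hx.elim (fun hx => Or.inl (Or.inr hx)) fun hx => Or.inr (Or.inl hx)
  have hdisj : Disjoint (flowVars f' ∪ flowVars g') (flowVars h') :=
    Set.disjoint_union_left.2 ⟨dfh, dgh⟩
  have hfix := hs.substF_eq_self (hdisj.mono_left hS).symm
  refine ⟨hfix, hfix.symm ▸ hdisj.mono_left ((hs.flowVars_substF_subset _).trans ?_)⟩
  exact Set.union_subset hS (Set.union_subset_union Set.subset_union_left Set.subset_union_right)

theorem exists_isMGUAll_of_isProd_isProd (hR : DisjointReps f g h f' g' h') {p q : UFlow}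
    (hp : IsProd f g p) (hq : IsProd p h q) :
    ∃ Θ, IsMGUAll Θ (chainEqs f' g' h') ∧ FlowEquiv q (substF Θ (f'.1, h'.2)) := by
  obtain ⟨θ, hθ, hs⟩ := exists_isMGUAll_supportedIn _ (hp.unifiable hR.1 hR.2.1 hR.2.2.2.1)
  obtain ⟨hfix, hd⟩ := hR.substF_eq_self_and_disjoint hs
  have hp₀ := isProd_of_isMGUAll hR.1 hR.2.1 hR.2.2.2.1 hθ
  have hq₀ : IsProd (substF θ (f'.1, g'.2)) (substF θ h') q := by
    rw [hfix]
    exact (hq.congr_left (hp.flowEquiv hp₀)).congr_right hR.2.2.1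
  exact hq₀.exists_isMGUAll_append hθ hd

theorem exists_isProd_isProd_of_unifiable (hR : DisjointReps f g h f' g' h')
    (hE : Unifiable (chainEqs f' g' h')) : ∃ p, IsProd f g p ∧ ∃ q, IsProd p h q := by
  obtain ⟨θ, hθ, hs⟩ := exists_isMGUAll_supportedIn _
    (hE.imp fun _ hσ => List.forall_mem_singleton.2 (hσ _ List.mem_cons_self))
  obtain ⟨hfix, hd⟩ := hR.substF_eq_self_and_disjoint hs
  obtain ⟨q, hq⟩ := exists_isProd_substF hθ hd hE
  rw [hfix] at hq
  exact ⟨_, isProd_of_isMGUAll hR.1 hR.2.1 hR.2.2.2.1 hθ, q, hq.congr_right hR.2.2.1.symm⟩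

theorem exists_isMGUAll_of_isProd_isProd' (hR : DisjointReps f g h f' g' h') {r s : UFlow}
    (hr : IsProd g h r) (hs : IsProd f r s) :
    ∃ Θ, IsMGUAll Θ (chainEqs f' g' h') ∧ FlowEquiv s (substF Θ (f'.1, h'.2)) := by
  obtain ⟨Θ, hΘ, hsΘ⟩ := hR.swap.exists_isMGUAll_of_isProd_isProd hr.swap hs.swap
  refine ⟨Θ, (isMGUAll_congr fun _ => unifiesAll_chainEqs_swap).1 hΘ, ?_⟩
  have := hsΘ.swap
  rwa [Prod.swap_swap] at this

theorem exists_isProd_isProd_of_unifiable' (hR : DisjointReps f g h f' g' h')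
    (hE : Unifiable (chainEqs f' g' h')) : ∃ r, IsProd g h r ∧ ∃ s, IsProd f r s := by
  obtain ⟨p, hp, q, hq⟩ := hR.swap.exists_isProd_isProd_of_unifiable
    (hE.imp fun _ => unifiesAll_chainEqs_swap.2)
  exact ⟨p.swap, by simpa using hp.swap, q.swap, by simpa using hq.swap⟩

end DisjointReps

theorem prod_assoc_general (f g h : UFlow) :
    ((∃ p, IsProd f g p ∧ ∃ q, IsProd p h q) ↔ (∃ r, IsProd g h r ∧ ∃ s, IsProd f r s)) ∧
    (∀ p q r s, IsProd f g p → IsProd p h q → IsProd g h r → IsProd f r s →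
      FlowEquiv q s) := by
  obtain ⟨g', h', hR⟩ := exists_disjointReps f g h
  refine ⟨⟨fun ⟨p, hp, q, hq⟩ => ?_, fun ⟨r, hr, s, hs⟩ => ?_⟩, fun p q r s hp hq hr hs => ?_⟩
  · obtain ⟨Θ, hΘ, -⟩ := hR.exists_isMGUAll_of_isProd_isProd hp hq
    exact hR.exists_isProd_isProd_of_unifiable' hΘ.unifiable
  · obtain ⟨Θ, hΘ, -⟩ := hR.exists_isMGUAll_of_isProd_isProd' hr hs
    exact hR.exists_isProd_isProd_of_unifiable hΘ.unifiable
  · obtain ⟨Θ, hΘ, hqΘ⟩ := hR.exists_isMGUAll_of_isProd_isProd hp hq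
    obtain ⟨Θ', hΘ', hsΘ'⟩ := hR.exists_isMGUAll_of_isProd_isProd' hr hs
    exact hqΘ.trans ((hΘ.flowEquiv hΘ' _).trans hsΘ'.symm)

/-- associativity of the product of flows where defined:
`(fg)h` is defined iff `f(gh)` is defined, and when defined they are equal
(up to renaming, as flows are considered up to renaming). -/
theorem prod_assoc (f g h : UFlow) (hf : IsFlow f) (hg : IsFlow g) (hh : IsFlow h) :
    ((∃ p, IsProd f g p ∧ ∃ q, IsProd p h q) ↔ (∃ r, IsProd g h r ∧ ∃ s, IsProd f r s)) ∧
    (∀ p q r s, IsProd f g p → IsProd p h q → IsProd g h r → IsProd f r s →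
      FlowEquiv q s) :=
  prod_assoc_general f g h
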